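/- If geometry g₁ topologically equals geometry g₂ (in the sense that no part of the interior or boundary of one lies in the exterior of the other and their interiors intersect), and both are regular closed sets, then g₁ = g₂ as sets. -/
import Mathlib


theorem topological_equals_of_regular_closed (g₁ g₂ : Set (ℝ × ℝ))
    (hreg₁ : g₁ = closure (interior g₁)) (hreg₂ : g₂ = closure (interior g₂))
    (hII : (interior g₁ ∩ interior g₂).Nonempty)
    (hIE : interior g₁ ∩ interior g₂ᶜ = ∅)
    (hBE : frontier g₁ ∩ interior g₂ᶜ = ∅)
    (hEI : interior g₁ᶜ ∩ interior g₂ = ∅)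
    (hEB : interior g₁ᶜ ∩ frontier g₂ = ∅) : g₁ = g₂ := by
  have hc₁ : IsClosed g₁ := hreg₁ ▸ isClosed_closure
  have hc₂ : IsClosed g₂ := hreg₂ ▸ isClosed_closure
  have h12 : interior g₁ ⊆ closure g₂ := by
    intro x hx
    rw [← compl_compl (closure g₂), ← interior_compl]
    intro hx'
    exact Set.eq_empty_iff_forall_notMem.mp hIE x ⟨hx, hx'⟩
  have h21 : interior g₂ ⊆ closure g₁ := by
    intro x hx
    rw [← compl_compl (closure g₁), ← interior_compl]
    intro hx'
    exact Set.eq_empty_iff_forall_notMem.mp hEI x ⟨hx', hx⟩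
  apply Set.Subset.antisymm
  · calc g₁ = closure (interior g₁) := hreg₁
      _ ⊆ closure (closure g₂) := closure_mono h12
      _ = g₂ := by rw [closure_closure, hc₂.closure_eq]
  · calc g₂ = closure (interior g₂) := hreg₂
      _ ⊆ closure (closure g₁) := closure_mono h21
      _ = g₁ := by rw [closure_closure, hc₁.closure_eq]
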